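/- Let C > 0, let E : [0,T] → (0,∞) be continuously differentiable with E(0) = E^{in} > 0, let D : [0,T] → [0,∞) be continuous, and suppose E'(t) + D(t) ≤ C (1 + E(t)²) E(t) for all t ∈ [0,T]. If T < (1/C) ln(√(1 + (E^{in})²)/E^{in}), then, setting A(T) = (E^{in}/√(1 + (E^{in})²)) e^{C T} (which satisfies A(T) < 1) and B(T) = A(T)/√(1 − A(T)²), one has for all t ∈ [0,T]: E(t) ≤ B(T) and E(t) + ∫₀^t D(τ) dτ ≤ E^{in} + C T B(T)(1 + B(T)²). -/

import Mathlib

/-!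
The map `H y = y / √(1 + y²)` has `H' y = (1 + y²)^(-3/2)`, so `E' ≤ C (1 + E²) E`
becomes the linear inequality `(H ∘ E)' ≤ C (H ∘ E)`, and Grönwall gives
`H (E t) ≤ H (Eᵢₙ) e^{Ct} ≤ A < 1`. As `H` is strictly increasing with
`H (a / √(1 - a²)) = a`, this is `E t ≤ B`. Then `E' + D ≤ C (1 + B²) B` on `[0, T]`,
and integrating it gives the energy bound.
-/

open Set Real MeasureTheory

lemma hasDerivAt_div_sqrt_one_add_sq (y : ℝ) :
    HasDerivAt (fun y : ℝ => y / √(1 + y ^ 2)) (1 / ((1 + y ^ 2) * √(1 + y ^ 2))) y := by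
  have hpos : 0 < 1 + y ^ 2 := by positivity
  have hsqrt : HasDerivAt (fun y : ℝ => √(1 + y ^ 2)) (y / √(1 + y ^ 2)) y := by
    convert ((hasDerivAt_pow 2 y).const_add 1).sqrt hpos.ne' using 1
    field_simp
    ring
  refine ((hasDerivAt_id' y).div hsqrt (sqrt_pos.mpr hpos).ne').congr_deriv ?_
  field_simp
  rw [sq_sqrt hpos.le]
  ring

lemma strictMono_div_sqrt_one_add_sq : StrictMono fun y : ℝ => y / √(1 + y ^ 2) :=
  strictMono_of_deriv_pos fun y => by
    rw [(hasDerivAt_div_sqrt_one_add_sq y).deriv]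
    positivity

lemma div_sqrt_one_sub_sq_div_sqrt_one_add_sq {a : ℝ} (ha : a ^ 2 < 1) :
    a / √(1 - a ^ 2) / √(1 + (a / √(1 - a ^ 2)) ^ 2) = a := by
  have hpos : 0 < 1 - a ^ 2 := by linarith
  have hsq : 1 + (a / √(1 - a ^ 2)) ^ 2 = (1 - a ^ 2)⁻¹ := by
    rw [div_pow, sq_sqrt hpos.le]
    field_simp
    ring
  rw [hsq, sqrt_inv, div_inv_eq_mul, div_mul_cancel₀ _ (sqrt_pos.mpr hpos).ne']

lemma one_add_sq_mul_le_one_add_sq_mul {x y : ℝ} (h : x ≤ y) :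
    (1 + x ^ 2) * x ≤ (1 + y ^ 2) * y := by
  have hq : 0 ≤ 1 + x ^ 2 + x * y + y ^ 2 := by nlinarith [sq_nonneg (x + y)]
  nlinarith [mul_nonneg (sub_nonneg.mpr h) hq]

lemma le_mul_exp_of_deriv_right_le_mul {f f' : ℝ → ℝ} {K a b : ℝ}
    (hf : ContinuousOn f (Icc a b)) (hf' : ∀ x ∈ Ico a b, HasDerivWithinAt f (f' x) (Ici x) x)
    (bound : ∀ x ∈ Ico a b, f' x ≤ K * f x) :
    ∀ x ∈ Icc a b, f x ≤ f a * exp (K * (x - a)) := by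
  intro x hx
  rw [← gronwallBound_ε0]
  refine le_gronwallBound_of_liminf_deriv_right_le hf (fun x hx r hr => ?_) le_rfl
    (by simpa using bound) x hx
  simpa [slope_def_field, div_eq_inv_mul] using (hf' x hx).liminf_right_slope_le hr

lemma div_sqrt_one_add_sq_le_mul_exp {E E' : ℝ → ℝ} {C a b : ℝ}
    (hE : ∀ x ∈ Icc a b, HasDerivAt E (E' x) x)
    (hE' : ∀ x ∈ Icc a b, E' x ≤ C * (1 + E x ^ 2) * E x) :
    ∀ t ∈ Icc a b, E t / √(1 + E t ^ 2) ≤ E a / √(1 + E a ^ 2) * exp (C * (t - a)) := by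
  have hH (x) (hx : x ∈ Icc a b) := (hasDerivAt_div_sqrt_one_add_sq (E x)).comp x (hE x hx)
  refine le_mul_exp_of_deriv_right_le_mul (fun x hx => (hH x hx).continuousAt.continuousWithinAt)
    (fun x hx => (hH x (Ico_subset_Icc_self hx)).hasDerivWithinAt) fun x hx => ?_
  calc 1 / ((1 + E x ^ 2) * √(1 + E x ^ 2)) * E' x
      ≤ 1 / ((1 + E x ^ 2) * √(1 + E x ^ 2)) * (C * (1 + E x ^ 2) * E x) := by
        gcongr
        exact hE' x (Ico_subset_Icc_self hx)
    _ = C * (E x / √(1 + E x ^ 2)) := by field_simp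

lemma add_integral_le_of_deriv_add_le {g g' D : ℝ → ℝ} {K a b : ℝ} (hab : a ≤ b)
    (hg : ContinuousOn g (Icc a b)) (hg' : ∀ x ∈ Ioo a b, HasDerivWithinAt g (g' x) (Ioi x) x)
    (hD : IntegrableOn D (Icc a b)) (bound : ∀ x ∈ Ioo a b, g' x + D x ≤ K) :
    g b + ∫ x in a..b, D x ≤ g a + K * (b - a) := by
  have := intervalIntegral.sub_le_integral_of_hasDeriv_right_of_le (φ := fun x => K - D x) hab hg
    hg' ((integrableOn_const measure_Icc_lt_top.ne).sub hD)
    fun x hx => le_sub_iff_add_le.mpr (bound x hx)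
  rw [intervalIntegral.integral_sub intervalIntegrable_const
    ((intervalIntegrable_iff_integrableOn_Icc_of_le hab).mpr hD), intervalIntegral.integral_const,
    smul_eq_mul] at this
  linarith

lemma div_sqrt_one_add_sq_mul_exp_lt_one {y C T : ℝ} (hy : 0 < y) (hC : 0 < C)
    (hT : T < 1 / C * log (√(1 + y ^ 2) / y)) : y / √(1 + y ^ 2) * exp (C * T) < 1 := by
  have hq : 0 < √(1 + y ^ 2) / y := by positivity
  have hexp : exp (C * T) < √(1 + y ^ 2) / y := by
    rw [← exp_log hq, exp_lt_exp]
    rwa [one_div, ← div_eq_inv_mul, lt_div_iff₀' hC] at hT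
  calc y / √(1 + y ^ 2) * exp (C * T) < y / √(1 + y ^ 2) * (√(1 + y ^ 2) / y) := by gcongr
    _ = 1 := by field_simp

theorem uniform_lifespan_energy_bound_general (C T Ein : ℝ) (hC : 0 < C)
    (E E' D : ℝ → ℝ)
    (hE0 : E 0 = Ein) (hEin : 0 < Ein)
    (hEderiv : ∀ t ∈ Icc (0:ℝ) T, HasDerivAt E (E' t) t)
    (hDcont : ContinuousOn D (Icc (0:ℝ) T))
    (hDpos : ∀ t ∈ Icc (0:ℝ) T, 0 ≤ D t)
    (hineq : ∀ t ∈ Icc (0:ℝ) T, E' t + D t ≤ C * (1 + (E t) ^ 2) * E t)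
    (hT : T < 1 / C * Real.log (Real.sqrt (1 + Ein ^ 2) / Ein))
    (A B : ℝ)
    (hA : A = Ein / Real.sqrt (1 + Ein ^ 2) * Real.exp (C * T))
    (hB : B = A / Real.sqrt (1 - A ^ 2)) :
    A < 1 ∧
    ∀ t ∈ Icc (0:ℝ) T,
      E t ≤ B ∧
      E t + ∫ τ in (0:ℝ)..t, D τ ≤ Ein + C * T * B * (1 + B ^ 2) := by
  have hA1 : A < 1 := hA ▸ div_sqrt_one_add_sq_mul_exp_lt_one hEin hC hT
  have hA0 : 0 < A := by rw [hA]; positivity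
  have hB0 : 0 < B := by rw [hB]; exact div_pos hA0 (sqrt_pos.mpr (by nlinarith))
  have hHB : B / √(1 + B ^ 2) = A := hB ▸ div_sqrt_one_sub_sq_div_sqrt_one_add_sq (by nlinarith)
  have hEB : ∀ t ∈ Icc (0:ℝ) T, E t ≤ B := fun t ht => by
    refine strictMono_div_sqrt_one_add_sq.le_iff_le.mp ?_
    calc E t / √(1 + E t ^ 2) ≤ Ein / √(1 + Ein ^ 2) * exp (C * (t - 0)) := hE0 ▸
          div_sqrt_one_add_sq_le_mul_exp hEderiv
            (fun x hx => by linarith [hineq x hx, hDpos x hx]) t ht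
      _ ≤ A := by rw [hA, sub_zero]; gcongr; exact ht.2
      _ = B / √(1 + B ^ 2) := hHB.symm
  have hflux : ∀ x ∈ Icc (0:ℝ) T, E' x + D x ≤ C * (1 + B ^ 2) * B := fun x hx =>
    (hineq x hx).trans <| by
      rw [mul_assoc, mul_assoc]
      exact mul_le_mul_of_nonneg_left (one_add_sq_mul_le_one_add_sq_mul (hEB x hx)) hC.le
  refine ⟨hA1, fun t ht => ⟨hEB t ht, ?_⟩⟩
  have hsub : Icc 0 t ⊆ Icc 0 T := Icc_subset_Icc_right ht.2
  calc E t + ∫ τ in (0:ℝ)..t, D τ ≤ E 0 + C * (1 + B ^ 2) * B * (t - 0) :=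
        add_integral_le_of_deriv_add_le ht.1
          (fun x hx => (hEderiv x (hsub hx)).continuousAt.continuousWithinAt)
          (fun x hx => (hEderiv x (hsub (Ioo_subset_Icc_self hx))).hasDerivWithinAt)
          (hDcont.mono hsub).integrableOn_Icc fun x hx => hflux x (hsub (Ioo_subset_Icc_self hx))
    _ ≤ Ein + C * T * B * (1 + B ^ 2) := by
        rw [hE0, sub_zero]
        nlinarith [mul_le_mul_of_nonneg_left ht.2 (by positivity : 0 ≤ C * (1 + B ^ 2) * B)]

/-- Uniform lifespan lemma: if `E' + D ≤ C (1 + E²) E` on `[0,T]`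
with `E > 0` continuously differentiable, `D ≥ 0` continuous, `E(0) = Eᵢₙ > 0`,
and `T < (1/C) ln(√(1 + Eᵢₙ²)/Eᵢₙ)`, then with
`A(T) = (Eᵢₙ/√(1 + Eᵢₙ²)) e^{CT} < 1` and `B(T) = A(T)/√(1 − A(T)²)` one has
`E(t) ≤ B(T)` and `E(t) + ∫₀ᵗ D ≤ Eᵢₙ + C T B(T)(1 + B(T)²)` for all `t ∈ [0,T]`. -/
theorem uniform_lifespan_energy_bound (C T Ein : ℝ) (hC : 0 < C)
    (E E' D : ℝ → ℝ)
    (hE0 : E 0 = Ein) (hEin : 0 < Ein)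
    (hEpos : ∀ t ∈ Icc (0:ℝ) T, 0 < E t)
    (hEderiv : ∀ t ∈ Icc (0:ℝ) T, HasDerivAt E (E' t) t)
    (hE'cont : ContinuousOn E' (Icc (0:ℝ) T))
    (hDcont : ContinuousOn D (Icc (0:ℝ) T))
    (hDpos : ∀ t ∈ Icc (0:ℝ) T, 0 ≤ D t)
    (hineq : ∀ t ∈ Icc (0:ℝ) T, E' t + D t ≤ C * (1 + (E t) ^ 2) * E t)
    (hT : T < 1 / C * Real.log (Real.sqrt (1 + Ein ^ 2) / Ein))
    (A B : ℝ)
    (hA : A = Ein / Real.sqrt (1 + Ein ^ 2) * Real.exp (C * T))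
    (hB : B = A / Real.sqrt (1 - A ^ 2)) :
    A < 1 ∧
    ∀ t ∈ Icc (0:ℝ) T,
      E t ≤ B ∧
      E t + ∫ τ in (0:ℝ)..t, D τ ≤ Ein + C * T * B * (1 + B ^ 2) :=
  uniform_lifespan_energy_bound_general C T Ein hC E E' D hE0 hEin hEderiv hDcont hDpos hineq hT A B
    hA hB
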